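/- For every function f : ℕ+ → ℕ+, every forward orbit of f contains 1 if and only if every forward orbit of f̂ is eventually periodic of period at most 3. -/
import Mathlib


/-- The bijection `φ : ℕ+ → ℕ+ × ℤ/4`, `φ(n) = (⌊(n+3)/4⌋, n mod 4)`. -/
def phi (n : ℕ+) : ℕ+ × ZMod 4 :=
  (⟨((n : ℕ) + 3) / 4, by have := n.pos; omega⟩, ((n : ℕ) : ZMod 4))

/-- The function `f̃ : ℕ+ × ℤ/4 → ℕ+ × ℤ/4` associated to `f`:
`f̃(m, j) = (f m, j + 1)` if `m ≠ 1`, and `f̃(1, j) = (1, j)`. -/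
def ftil (f : ℕ+ → ℕ+) (p : ℕ+ × ZMod 4) : ℕ+ × ZMod 4 :=
  if p.1 = 1 then (1, p.2) else (f p.1, p.2 + 1)

/-- `f̂ = φ⁻¹ ∘ f̃ ∘ φ`. -/
noncomputable def fhat (f : ℕ+ → ℕ+) : ℕ+ → ℕ+ :=
  Function.invFun phi ∘ ftil f ∘ phi

lemma phi_inj : Function.Injective phi := by
  intro a b h
  have h1 : ((a : ℕ) + 3) / 4 = ((b : ℕ) + 3) / 4 := congrArg (fun q => (q.1 : ℕ)) h
  have h2 : ((a : ℕ) : ZMod 4) = ((b : ℕ) : ZMod 4) := congrArg Prod.snd h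
  rw [ZMod.natCast_eq_natCast_iff, Nat.ModEq] at h2
  have := a.pos; have := b.pos
  exact PNat.coe_injective (by omega)

lemma phi_surj : Function.Surjective phi := by
  rintro ⟨m, j⟩
  have hr : j.val < 4 := ZMod.val_lt j
  have hm := m.pos
  refine ⟨⟨4 * (m : ℕ) - (4 - j.val) % 4, by omega⟩, ?_⟩
  unfold phi
  refine Prod.ext (PNat.coe_injective ?_) ?_
  · show ((4 * (m : ℕ) - (4 - j.val) % 4) + 3) / 4 = (m : ℕ)
    omega
  · show (((4 * (m : ℕ) - (4 - j.val) % 4 : ℕ)) : ZMod 4) = j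
    rw [← ZMod.natCast_mod]
    have : (4 * (m : ℕ) - (4 - j.val) % 4) % 4 = j.val := by omega
    rw [this, ZMod.natCast_zmod_val]

lemma phi_fhat (f : ℕ+ → ℕ+) (x : ℕ+) : phi (fhat f x) = ftil f (phi x) := by
  unfold fhat
  exact Function.rightInverse_invFun phi_surj _

lemma phi_fhat_iter (f : ℕ+ → ℕ+) (x : ℕ+) (n : ℕ) :
    phi ((fhat f)^[n] x) = (ftil f)^[n] (phi x) := by
  induction n with
  | zero => rfl
  | succ n ih =>
    rw [Function.iterate_succ_apply', Function.iterate_succ_apply', phi_fhat, ih]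

/-- auxiliary dynamics on first coordinate -/
def gfun (f : ℕ+ → ℕ+) (m : ℕ+) : ℕ+ := if m = 1 then 1 else f m

lemma ftil_fst (f : ℕ+ → ℕ+) (p : ℕ+ × ZMod 4) : (ftil f p).1 = gfun f p.1 := by
  unfold ftil gfun; split <;> simp_all

lemma ftil_iter_fst (f : ℕ+ → ℕ+) (p : ℕ+ × ZMod 4) (n : ℕ) :
    ((ftil f)^[n] p).1 = (gfun f)^[n] p.1 := by
  induction n with
  | zero => rfl
  | succ n ih =>
    rw [Function.iterate_succ_apply', Function.iterate_succ_apply', ftil_fst, ih]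

lemma ftil_fix (f : ℕ+ → ℕ+) (p : ℕ+ × ZMod 4) (h : p.1 = 1) : ftil f p = p := by
  unfold ftil; rw [if_pos h]; ext <;> simp [h.symm]

lemma ftil_snd (f : ℕ+ → ℕ+) (q : ℕ+ × ZMod 4) (h : q.1 ≠ 1) :
    (ftil f q).2 = q.2 + 1 := by
  unfold ftil; rw [if_neg h]

lemma ftil_iter_snd (f : ℕ+ → ℕ+) (p : ℕ+ × ZMod 4) (n : ℕ)
    (h : ∀ k < n, (gfun f)^[k] p.1 ≠ 1) :
    ((ftil f)^[n] p).2 = p.2 + (n : ZMod 4) := by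
  induction n with
  | zero => simp
  | succ n ih =>
    rw [Function.iterate_succ_apply']
    have h1 : ((ftil f)^[n] p).2 = p.2 + n := ih fun k hk => h k (by omega)
    have h2 : ((ftil f)^[n] p).1 ≠ 1 := by
      rw [ftil_iter_fst]; exact h n (by omega)
    rw [ftil_snd f _ h2, h1]
    push_cast
    ring

lemma gfun_one_iter (f : ℕ+ → ℕ+) (n : ℕ) : (gfun f)^[n] 1 = 1 := by
  induction n with
  | zero => rfl
  | succ n ih => rw [Function.iterate_succ_apply', ih]; simp [gfun]

lemma gfun_reaches (f : ℕ+ → ℕ+) (x : ℕ+) (n : ℕ) (h : f^[n] x = 1) :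
    (gfun f)^[n] x = 1 := by
  induction n generalizing x with
  | zero => exact h
  | succ n ih =>
    by_cases hx : x = 1
    · subst hx; exact gfun_one_iter f _
    · rw [Function.iterate_succ_apply] at h ⊢
      have : gfun f x = f x := by simp [gfun, hx]
      rw [this]; exact ih _ h

lemma gfun_eq_f (f : ℕ+ → ℕ+) (x : ℕ+) (h : ∀ n, f^[n] x ≠ 1) (n : ℕ) :
    (gfun f)^[n] x = f^[n] x := by
  induction n with
  | zero => rfl
  | succ n ih =>
    rw [Function.iterate_succ_apply', Function.iterate_succ_apply', ih]
    have : f^[n] x ≠ 1 := h n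
    simp [gfun, this]

theorem stmt_12 (f : ℕ+ → ℕ+) :
    (∀ x : ℕ+, ∃ n : ℕ, f^[n] x = 1) ↔
      (∀ x : ℕ+, ∃ N p : ℕ, 1 ≤ p ∧ p ≤ 3 ∧
        ∀ n ≥ N, (fhat f)^[n + p] x = (fhat f)^[n] x) := by
  constructor
  · intro h x
    obtain ⟨N, hN⟩ := h (phi x).1
    refine ⟨N, 1, le_refl 1, by norm_num, fun n hn => ?_⟩
    apply phi_inj
    rw [phi_fhat_iter, phi_fhat_iter]
    have hfix : ((ftil f)^[n] (phi x)).1 = 1 := by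
      rw [ftil_iter_fst]
      have h1 : (gfun f)^[N] (phi x).1 = 1 := gfun_reaches f _ N hN
      calc (gfun f)^[n] (phi x).1 = (gfun f)^[n - N] ((gfun f)^[N] (phi x).1) := by
            rw [← Function.iterate_add_apply]; congr 1; omega
        _ = 1 := by rw [h1]; exact gfun_one_iter f _
    rw [Function.iterate_succ_apply', ftil_fix f _ hfix]
  · intro h x
    by_contra hx
    push_neg at hx
    obtain ⟨y, hy⟩ := phi_surj (x, (0 : ZMod 4))
    obtain ⟨N, p, hp1, hp3, hper⟩ := h y
    have key := hper N (le_refl N)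
    have hne : ∀ k, (gfun f)^[k] (phi y).1 ≠ 1 := by
      intro k
      rw [hy]
      show (gfun f)^[k] x ≠ 1
      rw [gfun_eq_f f x hx]
      exact hx k
    have e1 : ((ftil f)^[N + p] (phi y)).2 = (phi y).2 + ((N + p : ℕ) : ZMod 4) :=
      ftil_iter_snd f _ _ fun k _ => hne k
    have e2 : ((ftil f)^[N] (phi y)).2 = (phi y).2 + ((N : ℕ) : ZMod 4) :=
      ftil_iter_snd f _ _ fun k _ => hne k
    have := congrArg (fun z => (phi z).2) key
    simp only [phi_fhat_iter] at this
    rw [e1, e2] at this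
    have hp0 : ((p : ℕ) : ZMod 4) = 0 := by
      push_cast at this ⊢
      linear_combination this
    rw [ZMod.natCast_eq_zero_iff] at hp0
    omega
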